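/- Exchange argument for complete unweighted graphs: in a complete unweighted graph, if S and S' are two target sets of the same cardinality such that S' consists of vertices whose thresholds (as a multiset) pointwise dominate those of S (i.e., there is a bijection φ : S → S' with t(φ(v)) ≥ t(v) for all v ∈ S), then for every λ, |Influenced[S, λ]| ≤ |Influenced[S', λ]|. In particular, among all sets of size β, a set consisting of β vertices of highest thresholds maximizes |Influenced[S, λ]|. -/

import Mathlib

open scoped Classical

variable {V : Type*} [Fintype V] [DecidableEq V]

/-- The influence diffusion process on a complete unweighted graph:
`Influenced[S, τ] = S ∪ { v : t v ≤ |Influenced[S, τ-1]| }` for `τ ≥ 1`. -/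
noncomputable def influencedK (t : V → ℕ) (S : Finset V) : ℕ → Finset V
  | 0 => S
  | τ + 1 => S ∪ Finset.univ.filter (fun v => t v ≤ (influencedK t S τ).card)

/-!
By induction on `λ`, `|Influenced[S, λ]| ≤ |Influenced[S', λ]|`. In the induction step the
threshold sets `F = {t ≤ c}` and `F' = {t ≤ c'}` satisfy `F ⊆ F'` because `c ≤ c'`, and
`S ∪ F` injects into `S' ∪ F'` by fixing the points of `F'` and applying `φ` to the
others: a point `v ∈ S` outside `F'` has `t (φ v) ≥ t v > c'`, so `φ v` cannot collide
with a fixed point.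
-/

open Finset

theorem card_union_le_card_union_of_injOn {α : Type*} [DecidableEq α] {S S' F F' : Finset α}
    {φ : α → α} (hmaps : Set.MapsTo φ S S') (hinj : Set.InjOn φ S) (hF : F ⊆ F')
    (hback : ∀ v ∈ S, φ v ∈ F' → v ∈ F') : #(S ∪ F) ≤ #(S' ∪ F') := by
  have mem_of_not_mem {u : α} (hu : u ∈ S ∪ F) (huF' : u ∉ F') : u ∈ S :=
    (mem_union.mp hu).resolve_right fun huF => huF' (hF huF)
  refine card_le_card_of_injOn (fun v => if v ∈ F' then v else φ v) ?_ ?_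
  · intro v hv
    rw [mem_coe] at hv
    simp only [mem_coe, mem_union]
    split_ifs with hvF'
    · exact .inr hvF'
    · exact .inl (hmaps (mem_of_not_mem hv hvF'))
  · intro v hv w hw hvw
    simp only [mem_coe] at hv hw
    by_cases hvF' : v ∈ F' <;> by_cases hwF' : w ∈ F' <;>
      simp only [hvF', hwF', if_true, if_false] at hvw
    · exact hvw
    · exact absurd (hback w (mem_of_not_mem hw hwF') (hvw ▸ hvF')) hwF'
    · exact absurd (hback v (mem_of_not_mem hv hvF') (hvw ▸ hwF')) hvF'
    · exact hinj (mem_of_not_mem hv hvF') (mem_of_not_mem hw hwF') hvw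

theorem card_union_threshold_le_of_injOn {t : V → ℕ} {S S' : Finset V} {φ : V → V}
    (hmaps : Set.MapsTo φ S S') (hinj : Set.InjOn φ S) (hdom : ∀ v ∈ S, t v ≤ t (φ v))
    {c c' : ℕ} (hc : c ≤ c') :
    #(S ∪ univ.filter (fun v => t v ≤ c)) ≤ #(S' ∪ univ.filter (fun v => t v ≤ c')) := by
  refine card_union_le_card_union_of_injOn hmaps hinj ?_ ?_
  · intro v
    simp only [mem_filter, mem_univ, true_and]
    exact fun hv => hv.trans hc
  · simp only [mem_filter, mem_univ, true_and]
    exact fun v hv hφv => (hdom v hv).trans hφv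

/-- Exchange argument on complete unweighted graphs: if `φ` maps `S` bijectively onto
`S'` and pointwise does not decrease thresholds, then `S'` influences at least as many
vertices as `S` within any latency bound `λ`. -/
theorem exchange_argument (t : V → ℕ) (S S' : Finset V) (φ : V → V)
    (hbij : Set.BijOn φ ↑S ↑S') (hdom : ∀ v ∈ S, t v ≤ t (φ v)) (lam : ℕ) :
    (influencedK t S lam).card ≤ (influencedK t S' lam).card := by
  induction lam with
  | zero => exact card_le_card_of_injOn φ hbij.mapsTo hbij.injOn
  | succ n ih => exact card_union_threshold_le_of_injOn hbij.mapsTo hbij.injOn hdom ih
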